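/- Let f_A : ℝ^n → ℝ be continuously differentiable, let γ > 0, q ∈ (0,1), x̂_A ∈ ℝ^n, and define θ(y) := y − γ∇f_A(y), with θ_i(y) and ∇_i f_A(y) denoting the i-th blocks of θ(y) and ∇f_A(y). For each agent i ∈ {1,…,N} let x^i : ℕ → ℝ^n be its stored vector (with blocks x_j^i(k) ∈ ℝ^{n_j}), let K^i ⊆ ℕ, and for each j ≠ i let τ_j^i : ℕ → ℕ be nondecreasing with τ_j^i(k) ≤ k, and assume: (a) x_i^i(k+1) = x_i^i(k) − γ∇_i f_A(x^i(k)) for k ∈ K^i and x_i^i(k+1) = x_i^i(k) for k ∉ K^i; (b) x_j^i(k) = x_j^j(τ_j^i(k)) for all k ∈ ℕ and all j ≠ i. Set D_o := max_{1 ≤ i ≤ N} ‖x^i(0) − x̂_A‖_max, and assume the contraction property: for every s ∈ ℕ and every y ∈ ℝ^n with ‖y − x̂_A‖_max ≤ q^s D_o, one has ‖θ_i(y) − x̂_{A,i}‖_{p_i} / w_i ≤ q^{s+1} D_o for every i. Let (k_m)_{m ∈ ℕ} be a strictly increasing sequence with k_0 = 0 such that for every m: for each agent j there exists t_j ∈ K^j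 with k_m ≤ t_j < k_{m+1}, and τ_j^i(k_{m+1}) > t_j for every i ≠ j. Define the cycle count c(k) := max{ m ∈ ℕ : k_m ≤ k }. Then for every agent i and every k ∈ ℕ, ‖x^i(k) − x̂_A‖_max ≤ q^{c(k)} D_o. -/
import Mathlib


open scoped ENNReal BigOperators

/-- The ℓᵖ norm of a vector in `ℝ^m`, for `p ∈ [1, ∞]` (given as `ℝ≥0∞`). -/
noncomputable def lpNorm {m : ℕ} (p : ℝ≥0∞) (v : Fin m → ℝ) : ℝ :=
  ‖(WithLp.equiv p (Fin m → ℝ)).symm v‖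

/-- The weighted block-maximum norm `max_i ‖x_i‖_{p_i} / w_i` of a vector of `ℝ^n`,
`n = n_1 + ⋯ + n_N`, identified with `ℝ^{n_1} × ⋯ × ℝ^{n_N}` via the sigma type. -/
theorem lpNorm_nonneg {m : ℕ} (p : ℝ≥0∞) [Fact (1 ≤ p)] (v : Fin m → ℝ) :
    0 ≤ lpNorm p v := by
  unfold lpNorm; exact norm_nonneg _

/-- The weighted block-maximum norm `max_i ‖x_i‖_{p_i} / w_i` of a vector of `ℝ^n`,
`n = n_1 + ⋯ + n_N`, identified with `ℝ^{n_1} × ⋯ × ℝ^{n_N}` via the sigma type. -/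
noncomputable def blockMaxNorm {N : ℕ} {n : Fin N → ℕ} (p : Fin N → ℝ≥0∞) (w : Fin N → ℝ)
    (x : EuclideanSpace ℝ ((i : Fin N) × Fin (n i))) : ℝ :=
  ⨆ i, lpNorm (p i) (fun j => x ⟨i, j⟩) / w i


theorem asynchronous_convergence_rate
    {N : ℕ} (hN : 1 ≤ N) (n : Fin N → ℕ)
    (p : Fin N → ℝ≥0∞) (hp : ∀ i, 1 ≤ p i)
    (w : Fin N → ℝ) (hw : ∀ i, 1 ≤ w i)
    (fA : EuclideanSpace ℝ ((i : Fin N) × Fin (n i)) → ℝ) (hfA : ContDiff ℝ 1 fA)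
    (γ : ℝ) (hγ : 0 < γ)
    (q : ℝ) (hq : 0 < q ∧ q < 1)
    (xhatA : EuclideanSpace ℝ ((i : Fin N) × Fin (n i)))
    (θ : EuclideanSpace ℝ ((i : Fin N) × Fin (n i)) →
      EuclideanSpace ℝ ((i : Fin N) × Fin (n i)))
    (hθ : ∀ y, θ y = y - γ • gradient fA y)
    -- each agent i stores a vector x i k at time k
    (x : Fin N → ℕ → EuclideanSpace ℝ ((i : Fin N) × Fin (n i)))
    (K : Fin N → Set ℕ)
    (τ : Fin N → Fin N → ℕ → ℕ)
    (hτmono : ∀ j i, j ≠ i → Monotone (τ j i))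
    (hτle : ∀ j i, j ≠ i → ∀ k, τ j i k ≤ k)
    -- (a) update law for agent i's own block
    (ha : ∀ (i : Fin N) (k : ℕ),
      (k ∈ K i → ∀ j' : Fin (n i),
        x i (k + 1) ⟨i, j'⟩ = x i k ⟨i, j'⟩ - γ * gradient fA (x i k) ⟨i, j'⟩) ∧
      (k ∉ K i → ∀ j' : Fin (n i), x i (k + 1) ⟨i, j'⟩ = x i k ⟨i, j'⟩))
    -- (b) agent i's copy of agent j's block
    (hb : ∀ (i j : Fin N), j ≠ i → ∀ (k : ℕ) (j' : Fin (n j)),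
      x i k ⟨j, j'⟩ = x j (τ j i k) ⟨j, j'⟩)
    (Do : ℝ) (hDo : Do = ⨆ i, blockMaxNorm p w (x i 0 - xhatA))
    -- the contraction property of the gradient-step map θ
    (hcontract : ∀ (s : ℕ) (y : EuclideanSpace ℝ ((i : Fin N) × Fin (n i))),
      blockMaxNorm p w (y - xhatA) ≤ q ^ s * Do →
      ∀ i, lpNorm (p i) (fun j => θ y ⟨i, j⟩ - xhatA ⟨i, j⟩) / w i ≤ q ^ (s + 1) * Do)
    -- the sequence of cycle completion times
    (km : ℕ → ℕ) (hkm : StrictMono km) (hkm0 : km 0 = 0)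
    (hcyc : ∀ (m : ℕ) (j : Fin N), ∃ t, t ∈ K j ∧ km m ≤ t ∧ t < km (m + 1) ∧
      ∀ i, i ≠ j → t < τ j i (km (m + 1)))
    -- the cycle count: c(k) = max { m : km m ≤ k }
    (ck : ℕ → ℕ) (hck : ∀ k, km (ck k) ≤ k ∧ ∀ m, km m ≤ k → m ≤ ck k) :
    ∀ (i : Fin N) (k : ℕ),
      blockMaxNorm p w (x i k - xhatA) ≤ q ^ (ck k) * Do := by

  obtain ⟨hq0, hq1⟩ := hq
  have hNne : Nonempty (Fin N) := Fin.pos_iff_nonempty.mp (by omega)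
  have hw0 : ∀ i, 0 < w i := fun i => lt_of_lt_of_le one_pos (hw i)
  set Bl : Fin N → Fin N → ℕ → ℝ :=
    fun i j k => lpNorm (p j) (fun j' => x i k ⟨j, j'⟩ - xhatA ⟨j, j'⟩) / w j with hBl
  have hBnn : ∀ i j k, 0 ≤ Bl i j k := fun i j k =>
    div_nonneg (by haveI := Fact.mk (hp j); exact lpNorm_nonneg _ _) (le_of_lt (hw0 j))
  have hblock : ∀ i k, blockMaxNorm p w (x i k - xhatA) = ⨆ j, Bl i j k := by
    intro i k
    simp only [blockMaxNorm, hBl, PiLp.sub_apply]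
  have hle : ∀ i k (C : ℝ), (∀ j, Bl i j k ≤ C) →
      blockMaxNorm p w (x i k - xhatA) ≤ C := by
    intro i k C h
    rw [hblock]
    exact ciSup_le h
  have hge : ∀ i j k, Bl i j k ≤ blockMaxNorm p w (x i k - xhatA) := by
    intro i j k
    rw [hblock]
    exact le_ciSup (f := fun j => Bl i j k) (Finite.bddAbove_range _) j
  have hinit : ∀ i, blockMaxNorm p w (x i 0 - xhatA) ≤ Do := by
    intro i
    rw [hDo]
    exact le_ciSup (f := fun i => blockMaxNorm p w (x i 0 - xhatA))
      (Finite.bddAbove_range _) i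
  have hDo0 : 0 ≤ Do := by
    obtain ⟨i0⟩ := hNne
    exact le_trans (hBnn i0 i0 0) (le_trans (hge i0 i0 0) (hinit i0))
  -- rewriting with hb
  have hbBl : ∀ i j, j ≠ i → ∀ k, Bl i j k = Bl j j (τ j i k) := by
    intro i j hji k
    simp only [hBl]
    have hf : (fun j' => x i k ⟨j, j'⟩ - xhatA ⟨j, j'⟩)
        = fun j' => x j (τ j i k) ⟨j, j'⟩ - xhatA ⟨j, j'⟩ :=
      funext fun j' => by rw [hb i j hji k j']
    rw [hf]
  -- no-update step
  have hconst : ∀ j k, k ∉ K j → Bl j j (k + 1) = Bl j j k := by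
    intro j k hk
    simp only [hBl]
    have hf : (fun j' => x j (k + 1) ⟨j, j'⟩ - xhatA ⟨j, j'⟩)
        = fun j' => x j k ⟨j, j'⟩ - xhatA ⟨j, j'⟩ :=
      funext fun j' => by rw [(ha j k).2 hk j']
    rw [hf]
  -- contraction step
  have hcontr' : ∀ j k (s : ℕ), k ∈ K j →
      blockMaxNorm p w (x j k - xhatA) ≤ q ^ s * Do →
      Bl j j (k + 1) ≤ q ^ (s + 1) * Do := by
    intro j k s hk hy
    have hfun : (fun j' => x j (k + 1) ⟨j, j'⟩ - xhatA ⟨j, j'⟩)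
        = fun j' => θ (x j k) ⟨j, j'⟩ - xhatA ⟨j, j'⟩ := by
      funext j'
      rw [(ha j k).1 hk j', hθ]
      simp [PiLp.sub_apply, PiLp.smul_apply]
    simp only [hBl, hfun]
    exact hcontract s (x j k) hy j
  have key : ∀ m : ℕ, ∀ i k, km m ≤ k →
      blockMaxNorm p w (x i k - xhatA) ≤ q ^ m * Do := by
    intro m
    induction m with
    | zero =>
      have hB : ∀ k j, Bl j j k ≤ Do := by
        intro k
        induction k using Nat.strong_induction_on with
        | _ k ih =>
          match k with
          | 0 => exact fun j => le_trans (hge j j 0) (hinit j)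
          | (k + 1) =>
            intro j
            by_cases hk : k ∈ K j
            · have h1 : blockMaxNorm p w (x j k - xhatA) ≤ q ^ 0 * Do := by
                rw [pow_zero, one_mul]
                apply hle
                intro j2
                by_cases hj2 : j2 = j
                · subst hj2; exact ih k (by omega) j2
                · rw [hbBl j j2 hj2 k]
                  exact ih (τ j2 j k) (by have := hτle j2 j hj2 k; omega) j2
              have h2 := hcontr' j k 0 hk h1
              rw [zero_add, pow_one] at h2
              have h3 : q * Do ≤ 1 * Do := mul_le_mul_of_nonneg_right hq1.le hDo0
              linarith
            · rw [hconst j k hk]; exact ih k (by omega) j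
      intro i k _
      rw [pow_zero, one_mul]
      apply hle
      intro j
      by_cases hji : j = i
      · subst hji; exact hB k j
      · rw [hbBl i j hji k]; exact hB _ j
    | succ m ih =>
      choose t ht using hcyc m
      have hBj : ∀ d j, Bl j j (t j + 1 + d) ≤ q ^ (m + 1) * Do := by
        intro d
        induction d with
        | zero =>
          intro j
          exact hcontr' j (t j) m (ht j).1 (ih j (t j) (ht j).2.1)
        | succ d ihd =>
          intro j
          have heq : t j + 1 + (d + 1) = (t j + 1 + d) + 1 := by omega
          rw [heq]
          by_cases hk' : (t j + 1 + d) ∈ K j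
          · exact hcontr' j (t j + 1 + d) m hk'
              (ih j (t j + 1 + d) (by have := (ht j).2.1; omega))
          · rw [hconst j (t j + 1 + d) hk']; exact ihd j
      have hBj' : ∀ j k', t j + 1 ≤ k' → Bl j j k' ≤ q ^ (m + 1) * Do := by
        intro j k' h
        obtain ⟨d, rfl⟩ := Nat.exists_eq_add_of_le h
        exact hBj d j
      intro i k hk
      apply hle
      intro j
      by_cases hji : j = i
      · subst hji
        exact hBj' j k (by have := (ht j).2.2.1; omega)
      · rw [hbBl i j hji k]
        apply hBj' j (τ j i k)
        have h2 := (ht j).2.2.2 i (fun h => hji h.symm)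
        have h3 := hτmono j i hji hk
        omega
  intro i k
  exact key (ck k) i k (hck k).1
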